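/- arXiv:0806.4054 — 3 statements merged into one kernel-verified Lean document; each statement's English description precedes it below -/
import Mathlib

section
/- Let X₂ be a bifree H₃-H₂ biset and X₁ a bifree H₂-H₁ biset, with points x₂ ∈ X₂ and x₁ ∈ X₁, and set X₃ = X₂ ×_{H₂} X₁. Then the structure data of X₃ at the point [x₂, x₁] is: L_{[x₂,x₁]} = γ_{x₂}⁻¹(K_{x₂} ∩ L_{x₁}), K_{[x₂,x₁]} = γ_{x₁}(K_{x₂} ∩ L_{x₁}), and γ_{[x₂,x₁]}(h₃) = γ_{x₁}(γ_{x₂}(h₃)) for all h₃ ∈ L_{[x₂,x₁]}. -/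
/-- A biset: a set `X` with a left `H₂`-action and a right `H₁`-action that commute. -/
structure BisetAction (H₂ H₁ X : Type*) [Group H₂] [Group H₁] where
  l : H₂ → X → X
  r : X → H₁ → X
  l_one : ∀ x, l 1 x = x
  l_mul : ∀ a b x, l (a * b) x = l a (l b x)
  r_one : ∀ x, r x 1 = x
  r_mul : ∀ x a b, r x (a * b) = r (r x a) b
  comm : ∀ a x b, r (l a x) b = l a (r x b)

namespace BisetAction

variable {H₂ H₁ X : Type*} [Group H₂] [Group H₁]

/-- Both actions are free. -/
def Bifree (B : BisetAction H₂ H₁ X) : Prop :=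
  (∀ (a : H₂) (x : X), B.l a x = x → a = 1) ∧
  (∀ (x : X) (b : H₁), B.r x b = x → b = 1)

/-- Indecomposable: transitive as a combined `(H₂, H₁)`-set. -/
def Indecomposable (B : BisetAction H₂ H₁ X) : Prop :=
  ∀ x y : X, ∃ (a : H₂) (b : H₁), y = B.r (B.l a x) b

/-- The subset `L_x = {h₂ ∈ H₂ | ∃ h₁, h₂·x = x·h₁}` of `H₂`. -/
def Lset (B : BisetAction H₂ H₁ X) (x : X) : Set H₂ :=
  {h₂ | ∃ h₁ : H₁, B.l h₂ x = B.r x h₁}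

/-- The subset `K_x = {h₁ ∈ H₁ | ∃ h₂, h₂·x = x·h₁}` of `H₁`. -/
def Rset (B : BisetAction H₂ H₁ X) (x : X) : Set H₁ :=
  {h₁ | ∃ h₂ : H₂, B.l h₂ x = B.r x h₁}

end BisetAction

/-- The relation on `X₂ × X₁` whose quotient is the balanced product `X₂ ×_{H₂} X₁`;
it identifies `(x₂·h, x₁)` with `(x₂, h·x₁)` for `h ∈ H₂`. -/
def bpRel {H₃ H₂ H₁ X₂ X₁ : Type*} [Group H₃] [Group H₂] [Group H₁]
    (B₂ : BisetAction H₃ H₂ X₂) (B₁ : BisetAction H₂ H₁ X₁) :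
    X₂ × X₁ → X₂ × X₁ → Prop :=
  fun p q => ∃ h : H₂, p.1 = B₂.r q.1 h ∧ q.2 = B₁.l h p.2

theorem bpRel_equivalence {H₃ H₂ H₁ X₂ X₁ : Type*} [Group H₃] [Group H₂] [Group H₁]
    (B₂ : BisetAction H₃ H₂ X₂) (B₁ : BisetAction H₂ H₁ X₁) :
    Equivalence (bpRel B₂ B₁) := by
  constructor
  · intro p
    exact ⟨1, by simp [B₂.r_one], by simp [B₁.l_one]⟩
  · rintro p q ⟨h, h1, h2⟩
    refine ⟨h⁻¹, ?_, ?_⟩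
    · rw [h1, ← B₂.r_mul, mul_inv_cancel, B₂.r_one]
    · rw [h2, ← B₁.l_mul, inv_mul_cancel, B₁.l_one]
  · rintro p q r ⟨h, h1, h2⟩ ⟨g, g1, g2⟩
    refine ⟨g * h, ?_, ?_⟩
    · rw [B₂.r_mul, ← g1, h1]
    · rw [B₁.l_mul, ← h2, g2]

theorem bpRel_exact {H₃ H₂ H₁ X₂ X₁ : Type*} [Group H₃] [Group H₂] [Group H₁]
    (B₂ : BisetAction H₃ H₂ X₂) (B₁ : BisetAction H₂ H₁ X₁) {p q : X₂ × X₁}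
    (h : Quot.mk (bpRel B₂ B₁) p = Quot.mk (bpRel B₂ B₁) q) : bpRel B₂ B₁ p q :=
  ((bpRel_equivalence B₂ B₁).eqvGen_iff).mp (Quot.eqvGen_exact h)

/-- Structure data of the balanced product `X₃ = X₂ ×_{H₂} X₁` at the point `[x₂, x₁]`:
`L_{[x₂,x₁]} = γ_{x₂}⁻¹(K_{x₂} ∩ L_{x₁})`, `K_{[x₂,x₁]} = γ_{x₁}(K_{x₂} ∩ L_{x₁})`
and `γ_{[x₂,x₁]} = γ_{x₁} ∘ γ_{x₂}`. -/
theorem stmt_6 {H₃ H₂ H₁ X₂ X₁ : Type*} [Group H₃] [Group H₂] [Group H₁]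
    (B₂ : BisetAction H₃ H₂ X₂) (B₁ : BisetAction H₂ H₁ X₁)
    (hB₂ : B₂.Bifree) (hB₁ : B₁.Bifree) (x₂ : X₂) (x₁ : X₁)
    (BP : BisetAction H₃ H₁ (Quot (bpRel B₂ B₁)))
    (hBPl : ∀ (h₃ : H₃) (y₂ : X₂) (y₁ : X₁),
        BP.l h₃ (Quot.mk (bpRel B₂ B₁) (y₂, y₁)) =
          Quot.mk (bpRel B₂ B₁) (B₂.l h₃ y₂, y₁))
    (hBPr : ∀ (y₂ : X₂) (y₁ : X₁) (h₁ : H₁),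
        BP.r (Quot.mk (bpRel B₂ B₁) (y₂, y₁)) h₁ =
          Quot.mk (bpRel B₂ B₁) (y₂, B₁.r y₁ h₁))
    (γ₂ : H₃ → H₂) (hγ₂ : ∀ a ∈ B₂.Lset x₂, B₂.l a x₂ = B₂.r x₂ (γ₂ a))
    (γ₁ : H₂ → H₁) (hγ₁ : ∀ a ∈ B₁.Lset x₁, B₁.l a x₁ = B₁.r x₁ (γ₁ a))
    (γ₃ : H₃ → H₁)
    (hγ₃ : ∀ a ∈ BP.Lset (Quot.mk (bpRel B₂ B₁) (x₂, x₁)),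
        BP.l a (Quot.mk (bpRel B₂ B₁) (x₂, x₁)) =
          BP.r (Quot.mk (bpRel B₂ B₁) (x₂, x₁)) (γ₃ a)) :
    BP.Lset (Quot.mk (bpRel B₂ B₁) (x₂, x₁)) =
        {h₃ : H₃ | h₃ ∈ B₂.Lset x₂ ∧ γ₂ h₃ ∈ (γ₂ '' B₂.Lset x₂) ∩ B₁.Lset x₁} ∧
    γ₃ '' BP.Lset (Quot.mk (bpRel B₂ B₁) (x₂, x₁)) =
        γ₁ '' ((γ₂ '' B₂.Lset x₂) ∩ B₁.Lset x₁) ∧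
    (∀ h₃ ∈ BP.Lset (Quot.mk (bpRel B₂ B₁) (x₂, x₁)), γ₃ h₃ = γ₁ (γ₂ h₃)) := by

  have rcan₂ : ∀ a b : H₂, B₂.r x₂ a = B₂.r x₂ b → a = b := by
    intro a b hab
    have : B₂.r x₂ (a * b⁻¹) = x₂ := by
      rw [B₂.r_mul, hab, ← B₂.r_mul, mul_inv_cancel, B₂.r_one]
    have := hB₂.2 x₂ _ this
    exact mul_inv_eq_one.mp this
  have rcan₁ : ∀ a b : H₁, B₁.r x₁ a = B₁.r x₁ b → a = b := by
    intro a b hab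
    have : B₁.r x₁ (a * b⁻¹) = x₁ := by
      rw [B₁.r_mul, hab, ← B₁.r_mul, mul_inv_cancel, B₁.r_one]
    have := hB₁.2 x₁ _ this
    exact mul_inv_eq_one.mp this
  -- membership characterization
  have hmem : ∀ h₃ : H₃, h₃ ∈ BP.Lset (Quot.mk (bpRel B₂ B₁) (x₂, x₁)) ↔
      (h₃ ∈ B₂.Lset x₂ ∧ γ₂ h₃ ∈ B₁.Lset x₁) := by
    intro h₃
    constructor
    · rintro ⟨h₁, heq⟩
      rw [hBPl, hBPr] at heq
      obtain ⟨h, h1, h2⟩ := bpRel_exact B₂ B₁ heq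
      simp only at h1 h2
      have hL2 : h₃ ∈ B₂.Lset x₂ := ⟨h, h1⟩
      have hg2 : γ₂ h₃ = h := rcan₂ _ _ (by rw [← hγ₂ h₃ hL2, h1])
      refine ⟨hL2, ?_⟩
      rw [hg2]
      exact ⟨h₁, h2.symm⟩
    · rintro ⟨hL2, hL1⟩
      refine ⟨γ₁ (γ₂ h₃), ?_⟩
      rw [hBPl, hBPr, hγ₂ h₃ hL2, ← hγ₁ _ hL1]
      exact Quot.sound ⟨γ₂ h₃, rfl, rfl⟩
  -- γ₃ computation
  have hcomp : ∀ h₃ ∈ BP.Lset (Quot.mk (bpRel B₂ B₁) (x₂, x₁)), γ₃ h₃ = γ₁ (γ₂ h₃) := by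
    intro h₃ hmem₃
    have heq := hγ₃ h₃ hmem₃
    rw [hBPl, hBPr] at heq
    obtain ⟨h, h1, h2⟩ := bpRel_exact B₂ B₁ heq
    simp only at h1 h2
    have hL2 : h₃ ∈ B₂.Lset x₂ := ⟨h, h1⟩
    have hg2 : γ₂ h₃ = h := rcan₂ _ _ (by rw [← hγ₂ h₃ hL2, h1])
    have hL1 : h ∈ B₁.Lset x₁ := ⟨γ₃ h₃, h2.symm⟩
    have : γ₁ h = γ₃ h₃ := rcan₁ _ _ (by rw [← hγ₁ h hL1, h2])
    rw [hg2, this]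
  refine ⟨?_, ?_, hcomp⟩
  · ext h₃
    simp only [Set.mem_setOf_eq, Set.mem_inter_iff, hmem]
    constructor
    · rintro ⟨h1, h2⟩
      exact ⟨h1, ⟨h₃, h1, rfl⟩, h2⟩
    · rintro ⟨h1, _, h2⟩
      exact ⟨h1, h2⟩
  · ext b
    simp only [Set.mem_image, Set.mem_inter_iff]
    constructor
    · rintro ⟨h₃, hm, rfl⟩
      obtain ⟨h1, h2⟩ := (hmem h₃).mp hm
      exact ⟨γ₂ h₃, ⟨⟨h₃, h1, rfl⟩, h2⟩, (hcomp h₃ hm).symm⟩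
    · rintro ⟨h, ⟨⟨a, ha, rfl⟩, hL1⟩, rfl⟩
      have hm : a ∈ BP.Lset (Quot.mk (bpRel B₂ B₁) (x₂, x₁)) := (hmem a).mpr ⟨ha, hL1⟩
      exact ⟨a, hm, hcomp a hm⟩
end

section
/- Let X₂ be an indecomposable bifree H₃-H₂ biset and X₁ an indecomposable bifree H₂-H₁ biset, with base points x₂ ∈ X₂ and x₁ ∈ X₁. Then the map sending h₂ ∈ H₂ to the combined (H₃, H₁)-orbit of [x₂·h₂, x₁] in X₂ ×_{H₂} X₁ induces a bijection from the double coset space K_{x₂}\H₂/L_{x₁} onto the set of combined (H₃, H₁)-orbits (indecomposable components) of X₂ ×_{H₂} X₁. -/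
/-- The double coset space `K_{x₂}\H₂/L_{x₁}` parametrizes the indecomposable
components (combined `(H₃, H₁)`-orbits) of the balanced product `X₂ ×_{H₂} X₁`,
via `h₂ ↦` the orbit of `[x₂·h₂, x₁]`. -/
theorem stmt_7 {H₃ H₂ H₁ X₂ X₁ : Type*} [Group H₃] [Group H₂] [Group H₁]
    (B₂ : BisetAction H₃ H₂ X₂) (B₁ : BisetAction H₂ H₁ X₁)
    (hB₂ : B₂.Bifree) (hB₁ : B₁.Bifree)
    (hInd₂ : B₂.Indecomposable) (hInd₁ : B₁.Indecomposable)
    (x₂ : X₂) (x₁ : X₁)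
    (BP : BisetAction H₃ H₁ (Quot (bpRel B₂ B₁)))
    (hBPl : ∀ (h₃ : H₃) (y₂ : X₂) (y₁ : X₁),
        BP.l h₃ (Quot.mk (bpRel B₂ B₁) (y₂, y₁)) =
          Quot.mk (bpRel B₂ B₁) (B₂.l h₃ y₂, y₁))
    (hBPr : ∀ (y₂ : X₂) (y₁ : X₁) (h₁ : H₁),
        BP.r (Quot.mk (bpRel B₂ B₁) (y₂, y₁)) h₁ =
          Quot.mk (bpRel B₂ B₁) (y₂, B₁.r y₁ h₁))
    (γ₂ : H₃ → H₂) (hγ₂ : ∀ a ∈ B₂.Lset x₂, B₂.l a x₂ = B₂.r x₂ (γ₂ a))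
    (dcRel : H₂ → H₂ → Prop)
    (hdc : dcRel = fun a b => ∃ k ∈ γ₂ '' B₂.Lset x₂, ∃ l ∈ B₁.Lset x₁, b = k * a * l)
    (orbRel : Quot (bpRel B₂ B₁) → Quot (bpRel B₂ B₁) → Prop)
    (horb : orbRel = fun q q' => ∃ (h₃ : H₃) (h₁ : H₁), q' = BP.r (BP.l h₃ q) h₁) :
    ∃ F : Quot dcRel → Quot orbRel,
      (∀ a : H₂, F (Quot.mk dcRel a) =
          Quot.mk orbRel (Quot.mk (bpRel B₂ B₁) (B₂.r x₂ a, x₁))) ∧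
      Function.Bijective F := by
  subst hdc
  subst horb
  classical
  -- `bpRel` is an equivalence relation
  have bpEquiv : Equivalence (bpRel B₂ B₁) := by
    constructor
    · intro p; exact ⟨1, (B₂.r_one p.1).symm, (B₁.l_one p.2).symm⟩
    · rintro p q ⟨h, e1, e2⟩
      refine ⟨h⁻¹, ?_, ?_⟩
      · rw [e1, ← B₂.r_mul, mul_inv_cancel, B₂.r_one]
      · rw [e2, ← B₁.l_mul, inv_mul_cancel, B₁.l_one]
    · rintro p q s ⟨h, e1, e2⟩ ⟨k, f1, f2⟩
      refine ⟨k * h, ?_, ?_⟩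
      · rw [B₂.r_mul, ← f1, ← e1]
      · rw [B₁.l_mul, ← e2, ← f2]
  have bpExact : ∀ p q : X₂ × X₁,
      Quot.mk (bpRel B₂ B₁) p = Quot.mk (bpRel B₂ B₁) q → bpRel B₂ B₁ p q :=
    fun p q h => (bpEquiv.eqvGen_iff).mp (Quot.eq.mp h)
  set orbRel : Quot (bpRel B₂ B₁) → Quot (bpRel B₂ B₁) → Prop :=
    fun q q' => ∃ (h₃ : H₃) (h₁ : H₁), q' = BP.r (BP.l h₃ q) h₁ with horb
  -- `orbRel` is an equivalence relation
  have orbEquiv : Equivalence orbRel := by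
    constructor
    · intro p; exact ⟨1, 1, by rw [BP.l_one, BP.r_one]⟩
    · rintro p q ⟨h₃, h₁, e⟩
      refine ⟨h₃⁻¹, h₁⁻¹, ?_⟩
      rw [e, ← BP.comm, ← BP.l_mul, inv_mul_cancel, BP.l_one, ← BP.r_mul,
        mul_inv_cancel, BP.r_one]
    · rintro p q s ⟨h₃, h₁, e⟩ ⟨k₃, k₁, f⟩
      refine ⟨k₃ * h₃, h₁ * k₁, ?_⟩
      rw [f, e, BP.l_mul, BP.r_mul, ← BP.comm]
  have orbExact : ∀ p q : Quot (bpRel B₂ B₁),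
      Quot.mk orbRel p = Quot.mk orbRel q → orbRel p q :=
    fun p q h => (orbEquiv.eqvGen_iff).mp (Quot.eq.mp h)
  -- right action cancellation (invertibility)
  have rcanc : ∀ (y y' : X₂) (k : H₂), B₂.r y k = B₂.r y' k → y = y' := by
    intro y y' k h
    have : B₂.r (B₂.r y k) k⁻¹ = B₂.r (B₂.r y' k) k⁻¹ := by rw [h]
    rwa [← B₂.r_mul, ← B₂.r_mul, mul_inv_cancel, B₂.r_one, B₂.r_one] at this
  -- freeness of the right H₂-action on X₂ gives cancellation in the other slot
  have rfree : ∀ k k' : H₂, B₂.r x₂ k = B₂.r x₂ k' → k = k' := by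
    intro k k' h
    have h2 : B₂.r (B₂.r x₂ k) (k⁻¹ * k') = B₂.r x₂ k := by
      rw [← B₂.r_mul, ← mul_assoc, mul_inv_cancel, one_mul, h]
    have := hB₂.2 (B₂.r x₂ k) (k⁻¹ * k') h2
    have : k' = k * (k⁻¹ * k') := by rw [← mul_assoc, mul_inv_cancel, one_mul]
    rw [this, hB₂.2 (B₂.r x₂ k) (k⁻¹ * k') h2, mul_one]
  -- the swap identity in the balanced product
  have swap : ∀ (y₂ : X₂) (h : H₂) (y₁ : X₁),
      Quot.mk (bpRel B₂ B₁) (B₂.r y₂ h, y₁) =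
        Quot.mk (bpRel B₂ B₁) (y₂, B₁.l h y₁) :=
    fun y₂ h y₁ => Quot.sound ⟨h, rfl, rfl⟩
  -- the underlying map
  set f : H₂ → Quot orbRel :=
    fun a => Quot.mk orbRel (Quot.mk (bpRel B₂ B₁) (B₂.r x₂ a, x₁)) with hf
  have wd : ∀ a b : H₂,
      (∃ k ∈ γ₂ '' B₂.Lset x₂, ∃ l ∈ B₁.Lset x₁, b = k * a * l) → f a = f b := by
    rintro a b ⟨k, ⟨h, hL, rfl⟩, l, ⟨m, hm⟩, rfl⟩
    refine Quot.sound ⟨h, m, ?_⟩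
    have e1 : B₂.r x₂ (γ₂ h * a * l) = B₂.r (B₂.l h (B₂.r x₂ a)) l := by
      rw [B₂.r_mul, B₂.r_mul, ← hγ₂ h hL, B₂.comm]
    rw [e1, hBPl, hBPr, ← hm, ← swap]
  refine ⟨Quot.lift f wd, fun a => rfl, ?_, ?_⟩
  · -- injectivity
    have key : ∀ a b : H₂, f a = f b →
        Quot.mk (fun a b => ∃ k ∈ γ₂ '' B₂.Lset x₂, ∃ l ∈ B₁.Lset x₁, b = k * a * l) a =
        Quot.mk (fun a b => ∃ k ∈ γ₂ '' B₂.Lset x₂, ∃ l ∈ B₁.Lset x₁, b = k * a * l) b := by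
      intro a b hab
      obtain ⟨h₃, h₁, heq⟩ := orbExact _ _ hab
      rw [hBPl, hBPr] at heq
      obtain ⟨h, e1, e2⟩ := bpExact _ _ heq
      simp only at e1 e2
      -- e1 : B₂.r x₂ b = B₂.r (B₂.l h₃ (B₂.r x₂ a)) h
      -- e2 : B₁.r x₁ h₁ = B₁.l h x₁
      have hLx₁ : h ∈ B₁.Lset x₁ := ⟨h₁, e2.symm⟩
      have e3 : B₂.r x₂ b = B₂.l h₃ (B₂.r x₂ (a * h)) := by
        rw [e1, B₂.comm, B₂.r_mul]
      have e4 : B₂.l h₃ x₂ = B₂.r x₂ (b * (a * h)⁻¹) := by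
        apply rcanc _ _ (a * h)
        rw [B₂.comm, ← e3, ← B₂.r_mul, mul_assoc, inv_mul_cancel, mul_one]
      have hLx₂ : h₃ ∈ B₂.Lset x₂ := ⟨b * (a * h)⁻¹, e4⟩
      have e5 : γ₂ h₃ = b * (a * h)⁻¹ := rfree _ _ (by rw [← hγ₂ h₃ hLx₂, e4])
      apply Quot.sound
      refine ⟨γ₂ h₃, ⟨h₃, hLx₂, rfl⟩, h, hLx₁, ?_⟩
      rw [e5]; group
    intro p q
    induction p using Quot.ind with | _ a =>
    induction q using Quot.ind with | _ b =>
    exact fun h => key a b h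
  · -- surjectivity
    intro q
    induction q using Quot.ind with | _ p =>
    induction p using Quot.ind with | _ yp =>
    obtain ⟨y₂, y₁⟩ := yp
    obtain ⟨h₃, a, hy₂⟩ := hInd₂ x₂ y₂
    obtain ⟨c, h₁, hy₁⟩ := hInd₁ x₁ y₁
    refine ⟨Quot.mk _ (a * c), Quot.sound ⟨h₃, h₁, ?_⟩⟩
    have e1 : Quot.mk (bpRel B₂ B₁) (B₂.r x₂ (a * c), x₁) =
        Quot.mk (bpRel B₂ B₁) (B₂.r x₂ a, B₁.l c x₁) := by
      rw [B₂.r_mul, swap]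
    rw [e1, hBPl, hBPr, hy₂, hy₁, B₂.comm]
end

section
/- (Factorization of an indecomposable biset.) Let X be an indecomposable bifree H₂-H₁ biset with base point x ∈ X. Regard H₂ as an H₂-L_x biset via left and right multiplication, regard L_x as an L_x-K_x biset with left multiplication and right action l ∗ k := l·γ_x⁻¹(k), and regard H₁ as a K_x-H₁ biset via left and right multiplication. Then the map from the iterated balanced product H₂ ×_{L_x} L_x ×_{K_x} H₁ to X sending the class of (h₂, l, h₁) to h₂·l·x·h₁ is an isomorphism of H₂-H₁ bisets (a well-defined bijection commuting with the left H₂-action and the right H₁-action). -/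
/-- Factorization of an indecomposable bifree biset: the map
`H₂ ×_{L_x} L_x ×_{K_x} H₁ → X`, `[(h₂, l, h₁)] ↦ h₂·l·x·h₁`, is an isomorphism
of `H₂`-`H₁` bisets.  Here the iterated balanced product is the quotient of
`H₂ × L_x × H₁` by `(a·u, l, b) ~ (a, u·l, b)` for `u ∈ L_x` and
`(a, l·γ_x⁻¹(k), b) ~ (a, l, k·b)` for `k ∈ K_x`, i.e. the quotient by the relation
`(a, l, b) ~ (a·u, u⁻¹·l·v, γ_x(v)⁻¹·b)` for `u, v ∈ L_x`. -/
theorem stmt_13 {H₂ H₁ X : Type*} [Group H₂] [Group H₁]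
    (B : BisetAction H₂ H₁ X) (hB : B.Bifree) (hInd : B.Indecomposable) (x : X)
    (γ : H₂ → H₁) (hγ : ∀ a ∈ B.Lset x, B.l a x = B.r x (γ a))
    (trel : (H₂ × {w : H₂ // w ∈ B.Lset x} × H₁) →
            (H₂ × {w : H₂ // w ∈ B.Lset x} × H₁) → Prop)
    (htrel : trel = fun p q => ∃ u ∈ B.Lset x, ∃ v ∈ B.Lset x,
        q.1 = p.1 * u ∧ (q.2.1 : H₂) = u⁻¹ * (p.2.1 : H₂) * v ∧
        q.2.2 = (γ v)⁻¹ * p.2.2) :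
    ∃ F : Quot trel → X,
      (∀ (a : H₂) (l : {w : H₂ // w ∈ B.Lset x}) (b : H₁),
          F (Quot.mk trel (a, l, b)) = B.r (B.l (a * (l : H₂)) x) b) ∧
      Function.Bijective F ∧
      (∀ (g : H₂) (a : H₂) (l : {w : H₂ // w ∈ B.Lset x}) (b : H₁),
          F (Quot.mk trel (g * a, l, b)) = B.l g (F (Quot.mk trel (a, l, b)))) ∧
      (∀ (a : H₂) (l : {w : H₂ // w ∈ B.Lset x}) (b : H₁) (h : H₁),
          F (Quot.mk trel (a, l, b * h)) = B.r (F (Quot.mk trel (a, l, b))) h) := by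
  obtain ⟨hlf, hrf⟩ := hB
  -- basic cancellation for the right action
  have rcancel : ∀ (c d : H₁), B.r x c = B.r x d → c = d := by
    intro c d h
    have h1 : B.r (B.r x c) (c⁻¹ * d) = B.r x c := by
      rw [← B.r_mul]
      have hcd : c * (c⁻¹ * d) = d := by group
      rw [hcd]; exact h.symm
    have h2 : c⁻¹ * d = 1 := hrf _ _ h1
    calc c = c * (c⁻¹ * d) := by rw [h2, mul_one]
      _ = d := by group
  -- γ is determined by the defining equation
  have key : ∀ (a : H₂) (c : H₁), B.l a x = B.r x c → γ a = c := by
    intro a c h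
    exact rcancel _ _ (by rw [← hγ a ⟨c, h⟩, h])
  -- inverse relation
  have hinv : ∀ (a : H₂) (c : H₁), B.l a x = B.r x c → B.l a⁻¹ x = B.r x c⁻¹ := by
    intro a c h
    have h1 : x = B.r (B.l a⁻¹ x) c := by
      have := congrArg (B.l a⁻¹) h
      rw [← B.l_mul, inv_mul_cancel, B.l_one, ← B.comm] at this
      exact this
    have := congrArg (fun y => B.r y c⁻¹) h1
    simp only [← B.r_mul, mul_inv_cancel, B.r_one] at this
    exact this.symm
  have hL1 : (1 : H₂) ∈ B.Lset x := ⟨1, by rw [B.l_one, B.r_one]⟩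
  -- the map on representatives
  set f : (H₂ × {w : H₂ // w ∈ B.Lset x} × H₁) → X :=
    fun p => B.r (B.l (p.1 * (p.2.1 : H₂)) x) p.2.2 with hf
  have hresp : ∀ p q, trel p q → f p = f q := by
    intro p q h
    rw [htrel] at h
    obtain ⟨u, hu, v, hv, h1, h2, h3⟩ := h
    have hq : q.1 * (q.2.1 : H₂) = p.1 * (p.2.1 : H₂) * v := by
      rw [h1, h2]; group
    have hlx : B.l (p.1 * (p.2.1 : H₂) * v) x
        = B.r (B.l (p.1 * (p.2.1 : H₂)) x) (γ v) := by
      rw [B.l_mul, hγ v hv, ← B.comm]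
    simp only [hf]
    rw [hq, h3, hlx, ← B.r_mul]
    congr 1; group
  refine ⟨Quot.lift f hresp, fun a l b => rfl, ⟨?_, ?_⟩, ?_, ?_⟩
  · -- injective
    intro q1 q2
    induction q1 using Quot.ind with | _ p =>
    induction q2 using Quot.ind with | _ q =>
    obtain ⟨a, l, b⟩ := p
    obtain ⟨a', l', b'⟩ := q
    intro h
    have h : B.r (B.l (a * (l : H₂)) x) b = B.r (B.l (a' * (l' : H₂)) x) b' := h
    -- rearrange: B.l (a*l) x = B.r (B.l (a'*l') x) (b' * b⁻¹)
    have h2 : B.l (a * (l : H₂)) x = B.r (B.l (a' * (l' : H₂)) x) (b' * b⁻¹) := by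
      have := congrArg (fun y => B.r y b⁻¹) h
      simp only [← B.r_mul, mul_inv_cancel, B.r_one] at this
      exact this
    set w : H₂ := (a' * (l' : H₂))⁻¹ * (a * (l : H₂)) with hwdef
    have hw : B.l w x = B.r x (b' * b⁻¹) := by
      rw [hwdef, B.l_mul, h2, ← B.comm, ← B.l_mul, inv_mul_cancel, B.l_one]
    have hwinv : B.l w⁻¹ x = B.r x (b' * b⁻¹)⁻¹ := hinv _ _ hw
    have hvmem : w⁻¹ ∈ B.Lset x := ⟨_, hwinv⟩
    have hγw : γ w⁻¹ = (b' * b⁻¹)⁻¹ := key _ _ hwinv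
    have humem : a⁻¹ * a' ∈ B.Lset x := by
      have hrewrite : a⁻¹ * a' = (l : H₂) * w⁻¹ * (l' : H₂)⁻¹ := by
        rw [hwdef]; group
      rw [hrewrite]
      obtain ⟨c1, hc1⟩ := l.2
      obtain ⟨c2, hc2⟩ := hvmem
      obtain ⟨c3, hc3⟩ := l'.2
      have hc3' := hinv _ _ hc3
      refine ⟨c1 * c2 * c3⁻¹, ?_⟩
      rw [B.l_mul, B.l_mul, hc3', ← B.comm, hc2, ← B.r_mul, ← B.comm, hc1, ← B.r_mul]
      congr 1; group
    apply Quot.sound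
    rw [htrel]
    refine ⟨a⁻¹ * a', humem, w⁻¹, hvmem, by group, ?_, ?_⟩
    · show (l' : H₂) = (a⁻¹ * a')⁻¹ * (l : H₂) * w⁻¹
      rw [hwdef]; group
    · show b' = (γ w⁻¹)⁻¹ * b
      rw [hγw]; group
  · -- surjective
    intro y
    obtain ⟨a, b, hy⟩ := hInd x y
    refine ⟨Quot.mk trel (a, ⟨1, hL1⟩, b), ?_⟩
    show B.r (B.l (a * 1) x) b = y
    rw [mul_one, hy]
  · -- left equivariance
    intro g a l b
    show B.r (B.l (g * a * (l : H₂)) x) b = B.l g (B.r (B.l (a * (l : H₂)) x) b)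
    rw [mul_assoc, B.l_mul, B.comm]
  · -- right equivariance
    intro a l b h
    show B.r (B.l (a * (l : H₂)) x) (b * h) = B.r (B.r (B.l (a * (l : H₂)) x) b) h
    rw [B.r_mul]
end
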